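/- arXiv:quant-ph/0110130 — 3 statements merged into one kernel-verified Lean document; each statement's English description precedes it below -/
import Mathlib

section
/- For any type P of sequences in X^n (a distribution on X with nP(a) ∈ ℕ for all a), the size of the type class T_P = {x ∈ X^n : P_x = P} satisfies (n+1)^{-|X|} · exp(n·H(P)) ≤ |T_P| ≤ exp(n·H(P)), where H(P) = -Σ_a P(a) log P(a) is the Shannon entropy (natural log). -/
open Finset Nat

private def extFun {D X : Type*} [Fintype D] [DecidableEq D] (S : Finset D) (a : X)
    (y : {i // i ∈ Sᶜ} → X) : D → X :=
  fun i => if h : i ∈ S then a else y ⟨i, by simp [h]⟩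

private lemma extFun_coe {D X : Type*} [Fintype D] [DecidableEq D] (S : Finset D) (a : X)
    (y : {i // i ∈ Sᶜ} → X) (i : {i // i ∈ Sᶜ}) : extFun S a y i.1 = y i := by
  rw [extFun, dif_neg (Finset.mem_compl.1 i.2)]

private lemma card_filter_subtype {D : Type*} [Fintype D] [DecidableEq D] (T : Finset D)
    (p : D → Prop) [DecidablePred p] :
    (univ.filter fun i : {i // i ∈ T} => p i.1).card = (T.filter p).card := by
  apply Finset.card_nbij (fun i => i.1)
  · intro i hi
    replace hi : p i.1 := by simpa using hi
    exact mem_filter.2 ⟨i.2, hi⟩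
  · intro i _ j _ h; exact Subtype.ext h
  · intro j hj
    simp only [coe_filter, Set.mem_setOf_eq, mem_coe, mem_filter] at hj ⊢
    exact ⟨⟨j, hj.1⟩, by simpa using hj.2, rfl⟩

private lemma card_type_class {X : Type*} [Fintype X] [DecidableEq X] (s : Finset X) :
    ∀ (D : Type) (_ : Fintype D) (_ : DecidableEq D) (c : X → ℕ),
      ∑ a ∈ s, c a = Fintype.card D →
      (univ.filter fun x : D → X =>
        (∀ i, x i ∈ s) ∧ ∀ a ∈ s, (univ.filter fun i => x i = a).card = c a).card
        = Nat.multinomial s c := by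
  induction s using Finset.cons_induction with
  | empty =>
    intro D _ _ c hsum
    have hD : Fintype.card D = 0 := hsum.symm ▸ by simp
    have hE : IsEmpty D := Fintype.card_eq_zero_iff.mp hD
    rw [Finset.filter_true_of_mem
        (fun x _ => ⟨fun i => (hE.false i).elim, fun a ha => by simp at ha⟩),
      Finset.card_univ, Fintype.card_fun, hD, pow_zero, Nat.multinomial_empty]
  | cons a t ha ih =>
    intro D _ _ c hsum
    rw [Finset.sum_cons] at hsum
    rw [Nat.multinomial_cons]
    have hmaps : ∀ x ∈ (univ.filter fun x : D → X =>
        (∀ i, x i ∈ cons a t ha) ∧ ∀ b ∈ cons a t ha, (univ.filter fun i => x i = b).card = c b),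
        (univ.filter fun i => x i = a) ∈ Finset.powersetCard (c a) univ := by
      intro x hx
      simp only [mem_filter, mem_univ, true_and] at hx
      exact Finset.mem_powersetCard.2 ⟨subset_univ _, hx.2 a (mem_cons_self a t)⟩
    rw [Finset.card_eq_sum_card_fiberwise hmaps]
    have hcard : ∀ S ∈ Finset.powersetCard (c a) univ,
        (((univ.filter fun x : D → X =>
          (∀ i, x i ∈ cons a t ha) ∧ ∀ b ∈ cons a t ha,
            (univ.filter fun i => x i = b).card = c b)).filter
            fun x => (univ.filter fun i => x i = a) = S).card = Nat.multinomial t c := by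
      intro S hS
      have hScard : S.card = c a := (Finset.mem_powersetCard.1 hS).2
      have haT : a ∉ t := ha
      have htarget := ih {i // i ∈ Sᶜ} inferInstance inferInstance c
        (by rw [Fintype.card_coe, card_compl, hScard]; omega)
      rw [← htarget]
      apply Finset.card_bij' (i := fun x _ => fun i : {i // i ∈ Sᶜ} => x i.1)
        (j := fun y _ => extFun S a y)
      · -- maps into target
        intro x hx
        rw [mem_filter, mem_filter] at hx
        obtain ⟨⟨-, hmem, hcnt⟩, hfib⟩ := hx
        have hfib' : ∀ i : D, x i = a ↔ i ∈ S := fun i => by rw [← hfib]; simp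
        have hnotS : ∀ i : {i // i ∈ Sᶜ}, x i.1 ≠ a := fun i hi =>
          absurd ((hfib' i.1).1 hi) (Finset.mem_compl.1 i.2)
        rw [mem_filter]
        refine ⟨mem_univ _, ?_, ?_⟩
        · intro i
          rcases Finset.mem_cons.1 (hmem i.1) with h | h
          · exact absurd h (hnotS i)
          · exact h
        · intro b hb
          have hba : b ≠ a := fun h => haT (h ▸ hb)
          rw [card_filter_subtype Sᶜ (fun i => x i = b)]
          have heq : Sᶜ.filter (fun i => x i = b) = univ.filter (fun i => x i = b) := by
            ext i
            simp only [mem_filter, mem_univ, true_and, Finset.mem_compl,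
              and_iff_right_iff_imp]
            intro hxi hiS
            exact hba (hxi.symm.trans ((hfib' i).2 hiS))
          rw [heq]
          exact hcnt b (Finset.mem_cons.2 (Or.inr hb))
      · -- maps back into source
        intro y hy
        rw [mem_filter] at hy
        obtain ⟨-, hmem, hcnt⟩ := hy
        have hfib : (univ.filter fun i : D => extFun S a y i = a) = S := by
          ext i
          simp only [mem_filter, mem_univ, true_and]
          by_cases h : i ∈ S
          · simp [extFun, h]
          · rw [extFun, dif_neg h]
            simp only [h, iff_false]
            intro hya
            exact haT (hya ▸ hmem ⟨i, by simp [h]⟩)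
        rw [mem_filter, mem_filter]
        refine ⟨⟨mem_univ _, ?_, ?_⟩, hfib⟩
        · intro i
          by_cases h : i ∈ S
          · simp [extFun, h, Finset.mem_cons]
          · rw [extFun, dif_neg h]
            exact Finset.mem_cons.2 (Or.inr (hmem ⟨i, by simp [h]⟩))
        · intro b hb
          rcases Finset.mem_cons.1 hb with rfl | hb'
          · rw [hfib, hScard]
          · have hba : b ≠ a := fun h => haT (h ▸ hb')
            have heq : (univ.filter fun i : D => extFun S a y i = b)
                = Sᶜ.filter (fun i : D => extFun S a y i = b) := by
              ext i
              simp only [mem_filter, mem_univ, true_and, Finset.mem_compl]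
              constructor
              · intro hxi
                refine ⟨fun h => ?_, hxi⟩
                rw [extFun, dif_pos h] at hxi
                exact hba hxi.symm
              · exact And.right
            rw [heq, ← card_filter_subtype Sᶜ]
            rw [show (univ.filter fun i : {i // i ∈ Sᶜ} => extFun S a y i.1 = b)
                = univ.filter fun i : {i // i ∈ Sᶜ} => y i = b from
              Finset.filter_congr fun i _ => by rw [extFun_coe]]
            exact hcnt b hb'
      · -- left inverse
        intro x hx
        rw [mem_filter, mem_filter] at hx
        obtain ⟨⟨-, hmem, hcnt⟩, hfib⟩ := hx
        have hfib' : ∀ i : D, x i = a ↔ i ∈ S := fun i => by rw [← hfib]; simp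
        funext i
        by_cases h : i ∈ S
        · rw [extFun, dif_pos h]; exact ((hfib' i).2 h).symm
        · rw [extFun, dif_neg h]
      · -- right inverse
        intro y hy
        funext i
        exact extFun_coe S a y i
    rw [Finset.sum_congr rfl hcard, Finset.sum_const, smul_eq_mul,
      Finset.card_powersetCard, Finset.card_univ, ← hsum]

private lemma fact_pow_le (m j : ℕ) : m ! * m ^ j ≤ j ! * m ^ m := by
  rcases le_or_gt j m with h | h
  · have h1 : j ! * m.descFactorial (m - j) = m ! := by
      have := Nat.factorial_mul_descFactorial (Nat.sub_le m j)
      rwa [show m - (m - j) = j by omega] at this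
    calc m ! * m ^ j = j ! * m.descFactorial (m - j) * m ^ j := by rw [h1]
      _ ≤ j ! * m ^ (m - j) * m ^ j :=
          Nat.mul_le_mul_right _ (Nat.mul_le_mul_left _ (Nat.descFactorial_le_pow _ _))
      _ = j ! * m ^ m := by rw [mul_assoc, ← pow_add]; congr 2; omega
  · have h2 : m ! * (m + 1).ascFactorial (j - m) = j ! := by
      have := Nat.factorial_mul_ascFactorial m (j - m)
      rwa [show m + (j - m) = j by omega] at this
    calc m ! * m ^ j = m ! * m ^ (j - m) * m ^ m := by
          rw [mul_assoc, ← pow_add]; congr 2; omega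
      _ ≤ m ! * (m + 1).ascFactorial (j - m) * m ^ m := by
          refine Nat.mul_le_mul_right _ (Nat.mul_le_mul_left _ ?_)
          calc m ^ (j - m) ≤ (m + 1) ^ (j - m) := Nat.pow_le_pow_left m.le_succ _
            _ ≤ _ := Nat.pow_succ_le_ascFactorial _ _
      _ = j ! * m ^ m := by rw [h2]

private lemma multinomial_term_le {X : Type*} [Fintype X] (c k : X → ℕ)
    (h : ∑ a, k a = ∑ a, c a) :
    Nat.multinomial univ k * ∏ a, c a ^ k a ≤ Nat.multinomial univ c * ∏ a, c a ^ c a := by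
  have hpos : 0 < (∏ a, (k a)!) * (∏ a, (c a)!) := by positivity
  refine Nat.le_of_mul_le_mul_left ?_ hpos
  have h1 : (∏ a, (k a)!) * Nat.multinomial univ k = (∑ a, k a)! := Nat.multinomial_spec _ _
  have h2 : (∏ a, (c a)!) * Nat.multinomial univ c = (∑ a, c a)! := Nat.multinomial_spec _ _
  calc (∏ a, (k a)!) * (∏ a, (c a)!) * (Nat.multinomial univ k * ∏ a, c a ^ k a)
      = ((∏ a, (k a)!) * Nat.multinomial univ k) * ((∏ a, (c a)!) * ∏ a, c a ^ k a) := by ring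
    _ = (∑ a, c a)! * ∏ a, ((c a)! * c a ^ k a) := by
        rw [h1, h, ← Finset.prod_mul_distrib]
    _ ≤ (∑ a, c a)! * ∏ a, ((k a)! * c a ^ c a) :=
        Nat.mul_le_mul_left _ (Finset.prod_le_prod' fun a _ => fact_pow_le (c a) (k a))
    _ = ((∏ a, (c a)!) * Nat.multinomial univ c) * ((∏ a, (k a)!) * ∏ a, c a ^ c a) := by
        rw [h2, Finset.prod_mul_distrib]
    _ = (∏ a, (k a)!) * (∏ a, (c a)!) * (Nat.multinomial univ c * ∏ a, c a ^ c a) := by ring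

/-- Size of a type class: `(n+1)^{-|X|} exp(n H(P)) ≤ |T_P| ≤ exp(n H(P))`,
where the type `P` is given by counts `c a` with `∑ a, c a = n` and
`P a = c a / n`, and `H` is the Shannon entropy with natural logarithm. -/
theorem type_class_size {X : Type*} [Fintype X] [DecidableEq X] (n : ℕ) (hn : 0 < n)
    (c : X → ℕ) (hc : ∑ a, c a = n) :
    ((n : ℝ) + 1) ^ (-(Fintype.card X : ℤ)) *
        Real.exp ((n : ℝ) * (-∑ a, ((c a : ℝ) / n) * Real.log ((c a : ℝ) / n))) ≤
      (((univ.filter fun x : Fin n → X =>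
          ∀ a, (univ.filter fun i => x i = a).card = c a).card : ℕ) : ℝ) ∧
    (((univ.filter fun x : Fin n → X =>
          ∀ a, (univ.filter fun i => x i = a).card = c a).card : ℕ) : ℝ) ≤
      Real.exp ((n : ℝ) * (-∑ a, ((c a : ℝ) / n) * Real.log ((c a : ℝ) / n))) := by
  have hn' : (0 : ℝ) < n := by exact_mod_cast hn
  set p : X → ℝ := fun a => (c a : ℝ) / n with hp
  have hppos : ∀ a, c a ≠ 0 → 0 < p a := fun a h =>
    div_pos (by exact_mod_cast Nat.pos_of_ne_zero h) hn'
  have hpnonneg : ∀ a, 0 ≤ p a := fun a => div_nonneg (Nat.cast_nonneg _) hn'.le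
  set Q : ℝ := ∏ a, p a ^ c a with hQ
  have hQpos : 0 < Q := Finset.prod_pos fun a _ => by
    rcases eq_or_ne (c a) 0 with h | h
    · rw [h, pow_zero]; exact one_pos
    · exact pow_pos (hppos a h) _
  -- exp(nH) = Q⁻¹
  have hE : Real.exp ((n : ℝ) * (-∑ a, p a * Real.log (p a))) = Q⁻¹ := by
    have hsum : (n : ℝ) * (-∑ a, p a * Real.log (p a))
        = ∑ a, (-((c a : ℝ) * Real.log (p a))) := by
      rw [← Finset.sum_neg_distrib, Finset.mul_sum]
      refine Finset.sum_congr rfl fun a _ => ?_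
      rw [hp]; field_simp
    rw [hsum, Real.exp_sum, hQ, ← Finset.prod_inv_distrib]
    refine Finset.prod_congr rfl fun a _ => ?_
    rcases eq_or_ne (c a) 0 with h | h
    · simp [h]
    · rw [Real.exp_neg, Real.exp_nat_mul, Real.exp_log (hppos a h)]
  -- the cardinality is the multinomial coefficient
  set M : ℕ := Nat.multinomial univ c with hM
  have hcount : (univ.filter fun x : Fin n → X =>
      ∀ a, (univ.filter fun i => x i = a).card = c a).card = M := by
    rw [hM, ← card_type_class univ (Fin n) inferInstance inferInstance c
      (by simpa using hc)]
    congr 1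
    ext x
    simp only [mem_filter, mem_univ, true_and, forall_const]
    tauto
  -- multinomial theorem
  have hsum1 : ∑ a, p a = 1 := by
    simp only [hp]
    rw [← Finset.sum_div, ← Nat.cast_sum, hc, div_self hn'.ne']
  have hMT : (1 : ℝ) = ∑ k ∈ piAntidiag (univ : Finset X) n,
      (Nat.multinomial univ k : ℝ) * ∏ a, p a ^ k a := by
    have := Finset.sum_pow_eq_sum_piAntidiag (univ : Finset X) p n
    rw [hsum1, one_pow] at this
    exact this
  have hcmem : c ∈ piAntidiag (univ : Finset X) n :=
    Finset.mem_piAntidiag.2 ⟨hc, fun i _ => mem_univ i⟩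
  -- upper bound: M * Q ≤ 1
  have hub : (M : ℝ) * Q ≤ 1 := by
    rw [hMT]
    exact Finset.single_le_sum (f := fun k => (Nat.multinomial univ k : ℝ) * ∏ a, p a ^ k a)
      (fun k _ => mul_nonneg (Nat.cast_nonneg _)
        (Finset.prod_nonneg fun a _ => pow_nonneg (hpnonneg a) _)) hcmem
  -- each term is at most M * Q
  have hterm : ∀ k ∈ piAntidiag (univ : Finset X) n,
      (Nat.multinomial univ k : ℝ) * ∏ a, p a ^ k a ≤ (M : ℝ) * Q := by
    intro k hk
    obtain ⟨hks, -⟩ := Finset.mem_piAntidiag.1 hk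
    have hprod : ∀ d : X → ℕ, ∑ a, d a = n →
        ∏ a, p a ^ d a = (∏ a, ((c a : ℝ)) ^ d a) / (n : ℝ) ^ n := by
      intro d hd
      simp only [hp]
      rw [show (∏ a, ((c a : ℝ) / n) ^ d a) = ∏ a, ((c a : ℝ) ^ d a / (n : ℝ) ^ d a) from
          Finset.prod_congr rfl fun a _ => div_pow _ _ _,
        Finset.prod_div_distrib, Finset.prod_pow_eq_pow_sum, hd]
    rw [hQ, hprod k hks, hprod c hc, ← mul_div_assoc, ← mul_div_assoc,
      div_le_div_iff_of_pos_right (by positivity)]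
    exact_mod_cast multinomial_term_le c k (by rw [hks, hc])
  -- number of types is at most (n+1)^|X|
  have hcard : ((piAntidiag (univ : Finset X) n).card : ℝ) ≤ ((n : ℝ) + 1) ^ Fintype.card X := by
    have hsub : piAntidiag (univ : Finset X) n ⊆
        Fintype.piFinset (fun _ : X => Finset.range (n + 1)) := by
      intro k hk
      obtain ⟨hks, -⟩ := Finset.mem_piAntidiag.1 hk
      rw [Fintype.mem_piFinset]
      intro a
      rw [Finset.mem_range]
      have : k a ≤ n := by
        rw [← hks]; exact Finset.single_le_sum (fun _ _ => Nat.zero_le _) (mem_univ a)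
      exact Nat.lt_succ_of_le this
    have := Finset.card_le_card hsub
    rw [Fintype.card_piFinset] at this
    simp only [Finset.card_range, Finset.prod_const, Finset.card_univ] at this
    calc ((piAntidiag (univ : Finset X) n).card : ℝ) ≤ ((n + 1) ^ Fintype.card X : ℕ) := by
          exact_mod_cast this
      _ = ((n : ℝ) + 1) ^ Fintype.card X := by push_cast; ring
  -- lower bound: 1 ≤ (n+1)^|X| * (M * Q)
  have hlb : (1 : ℝ) ≤ ((n : ℝ) + 1) ^ Fintype.card X * ((M : ℝ) * Q) := by
    calc (1 : ℝ) = ∑ k ∈ piAntidiag (univ : Finset X) n,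
          (Nat.multinomial univ k : ℝ) * ∏ a, p a ^ k a := hMT
      _ ≤ ∑ _k ∈ piAntidiag (univ : Finset X) n, (M : ℝ) * Q := Finset.sum_le_sum hterm
      _ = ((piAntidiag (univ : Finset X) n).card : ℝ) * ((M : ℝ) * Q) := by
          rw [Finset.sum_const, nsmul_eq_mul]
      _ ≤ ((n : ℝ) + 1) ^ Fintype.card X * ((M : ℝ) * Q) :=
          mul_le_mul_of_nonneg_right hcard
            (mul_nonneg (Nat.cast_nonneg _) hQpos.le)
  rw [hcount, hE]
  have hnp : (0 : ℝ) < ((n : ℝ) + 1) ^ Fintype.card X := by positivity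
  constructor
  · rw [zpow_neg, zpow_natCast, ← div_eq_mul_inv, div_le_iff₀ hQpos]
    calc ((↑n + 1 : ℝ) ^ Fintype.card X)⁻¹
        = ((↑n + 1 : ℝ) ^ Fintype.card X)⁻¹ * 1 := (mul_one _).symm
      _ ≤ ((↑n + 1 : ℝ) ^ Fintype.card X)⁻¹ *
            ((↑n + 1 : ℝ) ^ Fintype.card X * (↑M * Q)) :=
          mul_le_mul_of_nonneg_left hlb (inv_nonneg.2 hnp.le)
      _ = ↑M * Q := by field_simp
  · rw [← one_div, le_div_iff₀ hQpos]
    exact hub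
end

section
/- Let P, P' be distributions on finite X with |P(a) - P'(a)| ≤ δ for all a, let W, V be stochastic matrices from X to Y with |W(b|a) - V(b|a)| ≤ δ' for all a,b (and induced output distributions Q, Q'). Then |I(P,W) - I(P',V)| ≤ -|X||Y|(δ+δ') log((δ+δ')|X|) + δ log|Y| - |X||Y| δ' log δ', provided δ + δ' and δ' are at most appropriate small constants for the entropy continuity lemma to apply. -/
open Finset

lemma mi_eta_subadd {a b : ℝ} (ha : 0 ≤ a) (hb : 0 ≤ b) :
    Real.negMulLog (a + b) ≤ Real.negMulLog a + Real.negMulLog b := by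
  rcases ha.eq_or_lt with rfl | ha'
  · simp
  rcases hb.eq_or_lt with rfl | hb'
  · simp
  have hab : 0 < a + b := by linarith
  simp only [Real.negMulLog, neg_mul]
  have h1 : a * Real.log a ≤ a * Real.log (a + b) :=
    mul_le_mul_of_nonneg_left (Real.log_le_log ha' (by linarith)) ha
  have h2 : b * Real.log b ≤ b * Real.log (a + b) :=
    mul_le_mul_of_nonneg_left (Real.log_le_log hb' (by linarith)) hb
  have : (a + b) * Real.log (a + b) = a * Real.log (a+b) + b * Real.log (a+b) := by ring
  linarith

-- monotone on [0, e⁻¹]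
lemma mi_eta_mono : MonotoneOn Real.negMulLog (Set.Icc 0 (Real.exp (-1))) := by
  apply monotoneOn_of_deriv_nonneg (convex_Icc _ _) Real.continuous_negMulLog.continuousOn
  · intro x hx
    rw [interior_Icc] at hx
    exact (Real.differentiableAt_negMulLog (ne_of_gt hx.1)).differentiableWithinAt
  · intro x hx
    rw [interior_Icc] at hx
    rw [Real.deriv_negMulLog (ne_of_gt hx.1)]
    have : Real.log x ≤ -1 := by
      calc Real.log x ≤ Real.log (Real.exp (-1)) := Real.log_le_log hx.1 hx.2.le
      _ = -1 := Real.log_exp _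
    linarith

lemma mi_phi_deriv {d : ℝ} (hd : d ∈ Set.Ioo (0:ℝ) (1/2)) :
    HasDerivAt (fun x => Real.negMulLog x - Real.negMulLog (1 - x))
      ((-Real.log d - 1) - (Real.log (1 - d) + 1)) d := by
  have h1 : HasDerivAt Real.negMulLog (-Real.log d - 1) d :=
    Real.hasDerivAt_negMulLog (ne_of_gt hd.1)
  have h2 : HasDerivAt (fun x : ℝ => 1 - x) (-1) d := by
    simpa using (hasDerivAt_id d).const_sub 1
  have h3 : HasDerivAt (fun x => Real.negMulLog (1 - x)) ((-Real.log (1-d) - 1) * (-1)) d :=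
    (Real.hasDerivAt_negMulLog (by intro h; rw [sub_eq_zero] at h; linarith [hd.2] : (1:ℝ) - d ≠ 0)).comp d h2
  have := h1.sub h3
  refine this.congr_deriv ?_
  ring

lemma mi_eta_one_sub_le {d : ℝ} (hd0 : 0 ≤ d) (hd2 : d ≤ 1/2) :
    Real.negMulLog (1 - d) ≤ Real.negMulLog d := by
  set φ : ℝ → ℝ := fun x => Real.negMulLog x - Real.negMulLog (1 - x) with hφ
  have hconc : ConcaveOn ℝ (Set.Icc 0 (1/2)) φ := by
    apply AntitoneOn.concaveOn_of_deriv (convex_Icc _ _)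
    · exact (Real.continuous_negMulLog.sub
        (Real.continuous_negMulLog.comp (continuous_const.sub continuous_id))).continuousOn
    · intro x hx
      rw [interior_Icc] at hx
      exact (mi_phi_deriv hx).differentiableAt.differentiableWithinAt
    · rw [interior_Icc]
      intro x hx y hy hxy
      rw [(mi_phi_deriv hx).deriv, (mi_phi_deriv hy).deriv]
      have hx1 : (0:ℝ) < x * (1 - x) := by nlinarith [hx.1, hx.2]
      have hy1 : (0:ℝ) < y * (1 - y) := by nlinarith [hy.1, hy.2]
      have hmono : x * (1 - x) ≤ y * (1 - y) := by nlinarith [hx.1, hx.2, hy.1, hy.2]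
      have := Real.log_le_log hx1 hmono
      rw [Real.log_mul (ne_of_gt hx.1) (by nlinarith [hx.2] : (1:ℝ) - x ≠ 0)] at this
      rw [Real.log_mul (ne_of_gt hy.1) (by nlinarith [hy.2] : (1:ℝ) - y ≠ 0)] at this
      linarith
  have h0 : φ 0 = 0 := by simp [hφ]
  have h12 : φ (1/2) = 0 := by simp [hφ]; norm_num
  have key := hconc.2 (Set.mem_Icc.2 ⟨le_refl 0, by norm_num⟩)
    (Set.mem_Icc.2 ⟨by norm_num, le_refl (1/2:ℝ)⟩)
    (by linarith : (0:ℝ) ≤ 1 - 2*d) (by linarith : (0:ℝ) ≤ 2*d) (by ring)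
  simp only [smul_eq_mul, h0, h12, mul_zero, add_zero] at key
  have hd' : (0:ℝ) + 2 * d * (1/2) = d := by ring
  rw [hd'] at key
  have : (0:ℝ) ≤ φ d := by linarith
  simpa [hφ] using this

lemma mi_eta_sub_le {q d : ℝ} (hq : 0 ≤ q) (hqd : q + d ≤ 1) (hd0 : 0 ≤ d) (hd2 : d ≤ 1/2) :
    Real.negMulLog q - Real.negMulLog (q + d) ≤ Real.negMulLog d := by
  rcases hd0.eq_or_lt with rfl | hd0'
  · simp
  set f : ℝ → ℝ := fun x => Real.negMulLog x - Real.negMulLog (x + d) with hf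
  have hderiv : ∀ x ∈ Set.Ioo (0:ℝ) (1 - d), HasDerivAt f
      (Real.log (x + d) - Real.log x) x := by
    intro x hx
    have h1 : HasDerivAt Real.negMulLog (-Real.log x - 1) x :=
      Real.hasDerivAt_negMulLog (ne_of_gt hx.1)
    have h2 : HasDerivAt (fun y : ℝ => y + d) 1 x := by
      simpa using (hasDerivAt_id x).add_const d
    have h3 : HasDerivAt (fun y => Real.negMulLog (y + d)) ((-Real.log (x+d) - 1) * 1) x :=
      by have := (Real.hasDerivAt_negMulLog (by nlinarith [hx.1] : x + d ≠ 0)).comp x h2; exact this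
    have := h1.sub h3
    refine this.congr_deriv ?_
    ring
  have hmono : MonotoneOn f (Set.Icc 0 (1 - d)) := by
    apply monotoneOn_of_deriv_nonneg (convex_Icc _ _)
    · exact (Real.continuous_negMulLog.sub
        (Real.continuous_negMulLog.comp (continuous_id.add continuous_const))).continuousOn
    · intro x hx
      rw [interior_Icc] at hx
      exact (hderiv x hx).differentiableAt.differentiableWithinAt
    · intro x hx
      rw [interior_Icc] at hx
      rw [(hderiv x hx).deriv]
      have := Real.log_le_log hx.1 (by linarith : x ≤ x + d)
      linarith
  have hq' : q ∈ Set.Icc (0:ℝ) (1 - d) := ⟨hq, by linarith⟩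
  have h1d : (1 - d) ∈ Set.Icc (0:ℝ) (1 - d) := ⟨by linarith, le_refl _⟩
  have key := hmono hq' h1d (by linarith : q ≤ 1 - d)
  have : f (1 - d) = Real.negMulLog (1 - d) := by
    have h' : 1 - d + d = 1 := by ring
    simp only [hf, h', Real.negMulLog_one, sub_zero]
  rw [this] at key
  calc Real.negMulLog q - Real.negMulLog (q + d) = f q := rfl
  _ ≤ Real.negMulLog (1 - d) := key
  _ ≤ Real.negMulLog d := mi_eta_one_sub_le hd0 hd2

lemma mi_eta_abs {p q : ℝ} (hp0 : 0 ≤ p) (hp1 : p ≤ 1) (hq0 : 0 ≤ q) (hq1 : q ≤ 1)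
    (hpq : |p - q| ≤ 1/2) :
    |Real.negMulLog p - Real.negMulLog q| ≤ Real.negMulLog |p - q| := by
  wlog h : q ≤ p generalizing p q
  · have := this hq0 hq1 hp0 hp1 (by rwa [abs_sub_comm]) (le_of_not_ge h)
    rwa [abs_sub_comm (Real.negMulLog q), abs_sub_comm q] at this
  have hd0 : 0 ≤ p - q := by linarith
  rw [abs_of_nonneg hd0] at hpq ⊢
  rw [abs_le]
  constructor
  · have := mi_eta_sub_le hq0 (by linarith : q + (p - q) ≤ 1) hd0 hpq
    have hq' : q + (p - q) = p := by ring
    rw [hq'] at this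
    linarith
  · have := mi_eta_subadd hq0 hd0
    have hq' : q + (p - q) = p := by ring
    rw [hq'] at this
    linarith

lemma mi_jensen {ι : Type*} [Fintype ι] [Nonempty ι] (d : ι → ℝ) (hd : ∀ i, 0 ≤ d i) :
    ∑ i, Real.negMulLog (d i) ≤
      (Fintype.card ι : ℝ) * Real.negMulLog ((∑ i, d i) / (Fintype.card ι : ℝ)) := by
  have hN : (0:ℝ) < (Fintype.card ι : ℝ) := by
    exact_mod_cast Fintype.card_pos
  have key := Real.concaveOn_negMulLog.le_map_sum (t := Finset.univ)
    (w := fun _ : ι => 1 / (Fintype.card ι : ℝ)) (p := d)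
    (fun i _ => by positivity)
    (by rw [Finset.sum_const, Finset.card_univ, nsmul_eq_mul]; field_simp)
    (fun i _ => Set.mem_Ici.2 (hd i))
  simp only [smul_eq_mul] at key
  rw [← Finset.mul_sum, ← Finset.mul_sum, one_div, ← div_eq_inv_mul, ← div_eq_inv_mul] at key
  calc ∑ i, Real.negMulLog (d i)
      = (Fintype.card ι : ℝ) * ((∑ i, Real.negMulLog (d i)) / (Fintype.card ι : ℝ)) := by
        field_simp
    _ ≤ (Fintype.card ι : ℝ) * Real.negMulLog ((∑ i, d i) / (Fintype.card ι : ℝ)) :=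
        mul_le_mul_of_nonneg_left key hN.le

lemma mi_ent_cont {ι : Type*} [Fintype ι] [Nonempty ι] (p q : ι → ℝ)
    (hp0 : ∀ i, 0 ≤ p i) (hp1 : ∀ i, p i ≤ 1) (hq0 : ∀ i, 0 ≤ q i) (hq1 : ∀ i, q i ≤ 1)
    (θ : ℝ) (hθ : ∑ i, |p i - q i| ≤ θ) (hθ2 : θ ≤ 1/2)
    (hθ3 : θ / (Fintype.card ι : ℝ) ≤ Real.exp (-1)) :
    |∑ i, Real.negMulLog (p i) - ∑ i, Real.negMulLog (q i)| ≤
      (Fintype.card ι : ℝ) * Real.negMulLog (θ / (Fintype.card ι : ℝ)) := by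
  have hN : (0:ℝ) < (Fintype.card ι : ℝ) := by exact_mod_cast Fintype.card_pos
  have habs : ∀ i, |p i - q i| ≤ 1/2 := by
    intro i
    calc |p i - q i| ≤ ∑ j, |p j - q j| := by
          exact Finset.single_le_sum (f := fun j => |p j - q j|)
            (fun j _ => abs_nonneg _) (Finset.mem_univ i)
    _ ≤ θ := hθ
    _ ≤ 1/2 := hθ2
  calc |∑ i, Real.negMulLog (p i) - ∑ i, Real.negMulLog (q i)|
      = |∑ i, (Real.negMulLog (p i) - Real.negMulLog (q i))| := by rw [Finset.sum_sub_distrib]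
    _ ≤ ∑ i, |Real.negMulLog (p i) - Real.negMulLog (q i)| := Finset.abs_sum_le_sum_abs _ _
    _ ≤ ∑ i, Real.negMulLog |p i - q i| := Finset.sum_le_sum (fun i _ =>
        mi_eta_abs (hp0 i) (hp1 i) (hq0 i) (hq1 i) (habs i))
    _ ≤ (Fintype.card ι : ℝ) *
        Real.negMulLog ((∑ i, |p i - q i|) / (Fintype.card ι : ℝ)) :=
        mi_jensen _ (fun i => abs_nonneg _)
    _ ≤ (Fintype.card ι : ℝ) * Real.negMulLog (θ / (Fintype.card ι : ℝ)) := by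
        apply mul_le_mul_of_nonneg_left _ hN.le
        have hθ0 : (0:ℝ) ≤ θ :=
          le_trans (Finset.sum_nonneg (fun i _ => abs_nonneg _)) hθ
        have hdiv : (∑ i, |p i - q i|) / (Fintype.card ι : ℝ) ≤ θ / (Fintype.card ι : ℝ) :=
          div_le_div_of_nonneg_right hθ hN.le
        apply mi_eta_mono
        · exact Set.mem_Icc.2 ⟨by positivity, le_trans hdiv hθ3⟩
        · exact Set.mem_Icc.2 ⟨by positivity, hθ3⟩
        · exact hdiv

lemma mi_scale {c x : ℝ} (hc : 0 < c) (hx : 0 < x) :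
    c * Real.negMulLog (x / c) = x * Real.log c - x * Real.log x := by
  rw [Real.negMulLog, Real.log_div hx.ne' hc.ne']
  field_simp
  ring

lemma mi_exp : (1/4 : ℝ) ≤ Real.exp (-1) := by
  rw [Real.exp_neg]
  have h1 : Real.exp 1 ≤ 4 := by linarith [Real.exp_one_lt_d9]
  have h2 : (0:ℝ) < Real.exp 1 := Real.exp_pos 1
  rw [show (1/4 : ℝ) = 4⁻¹ by norm_num]
  exact inv_anti₀ h2 h1



set_option maxHeartbeats 1600000 in
/-- Continuity of mutual information: if `|P - P'| ≤ δ` entrywise and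
`|W - V| ≤ δ'` entrywise, then
`|I(P,W) - I(P',V)| ≤ -|X||Y|(δ+δ') log((δ+δ')|X|) + δ log|Y| - |X||Y| δ' log δ'`,
provided `δ + δ'` and `δ'` are small enough for the entropy continuity lemma. -/
theorem mutual_information_continuity {X Y : Type*} [Fintype X] [Fintype Y]
    [Nonempty X] [Nonempty Y]
    (P P' : X → ℝ) (hP0 : ∀ a, 0 ≤ P a) (hP'0 : ∀ a, 0 ≤ P' a)
    (hP1 : ∑ a, P a = 1) (hP'1 : ∑ a, P' a = 1)
    (W V : X → Y → ℝ) (hW0 : ∀ a b, 0 ≤ W a b) (hV0 : ∀ a b, 0 ≤ V a b)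
    (hW1 : ∀ a, ∑ b, W a b = 1) (hV1 : ∀ a, ∑ b, V a b = 1)
    (δ δ' : ℝ) (hδ : 0 < δ) (hδ' : 0 < δ')
    (hPP' : ∀ a, |P a - P' a| ≤ δ) (hWV : ∀ a b, |W a b - V a b| ≤ δ')
    (hsmall : ((Fintype.card X : ℝ) * (Fintype.card Y : ℝ)) * (δ + δ') ≤ 1 / 2)
    (hsmall' : ((Fintype.card X : ℝ) * (Fintype.card Y : ℝ)) * δ' ≤ 1 / 2) :
    |((-∑ b, (∑ a, P a * W a b) * Real.log (∑ a, P a * W a b)) -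
        (-∑ a, P a * ∑ b, W a b * Real.log (W a b))) -
      ((-∑ b, (∑ a, P' a * V a b) * Real.log (∑ a, P' a * V a b)) -
        (-∑ a, P' a * ∑ b, V a b * Real.log (V a b)))| ≤
      -((Fintype.card X : ℝ) * (Fintype.card Y : ℝ) * (δ + δ') *
          Real.log ((δ + δ') * (Fintype.card X : ℝ))) +
        δ * Real.log (Fintype.card Y : ℝ) -
        (Fintype.card X : ℝ) * (Fintype.card Y : ℝ) * δ' * Real.log δ' := by
  obtain ⟨nX, hnX⟩ : ∃ r : ℝ, r = (Fintype.card X : ℝ) := ⟨_, rfl⟩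
  obtain ⟨nY, hnY⟩ : ∃ r : ℝ, r = (Fintype.card Y : ℝ) := ⟨_, rfl⟩
  rw [← hnX, ← hnY] at hsmall hsmall' ⊢
  have hnX1 : (1:ℝ) ≤ nX := by
    rw [hnX]; exact_mod_cast Fintype.card_pos
  have hnY1 : (1:ℝ) ≤ nY := by
    rw [hnY]; exact_mod_cast Fintype.card_pos
  have hnX0 : (0:ℝ) < nX := lt_of_lt_of_le one_pos hnX1
  have hnY0 : (0:ℝ) < nY := lt_of_lt_of_le one_pos hnY1
  rcases Nat.lt_or_ge (Fintype.card Y) 2 with hY1 | hY2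
  · -- card Y = 1
    have hY1' : Fintype.card Y = 1 := by
      have := Fintype.card_pos (α := Y); omega
    obtain ⟨b0, hb0⟩ := Fintype.card_eq_one_iff.mp hY1'
    have hsum : ∀ f : Y → ℝ, (∑ b, f b) = f b0 := fun f =>
      Fintype.sum_eq_single b0 (fun x hx => absurd (hb0 x) hx)
    have hW' : ∀ a b, W a b = 1 := by
      intro a b
      have h := hW1 a; rw [hsum (W a)] at h; rw [hb0 b]; exact h
    have hV' : ∀ a b, V a b = 1 := by
      intro a b
      have h := hV1 a; rw [hsum (V a)] at h; rw [hb0 b]; exact h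
    have hnY1' : nY = 1 := by rw [hnY, hY1']; norm_num
    have e1 : (∑ b, (∑ a, P a * W a b) * Real.log (∑ a, P a * W a b)) = 0 := by
      rw [hsum]
      have : (∑ a, P a * W a b0) = 1 := by
        simp only [hW', mul_one]; exact hP1
      rw [this, Real.log_one, mul_zero]
    have e2 : (∑ b, (∑ a, P' a * V a b) * Real.log (∑ a, P' a * V a b)) = 0 := by
      rw [hsum]
      have : (∑ a, P' a * V a b0) = 1 := by
        simp only [hV', mul_one]; exact hP'1
      rw [this, Real.log_one, mul_zero]
    have e3 : (∑ a, P a * ∑ b, W a b * Real.log (W a b)) = 0 := by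
      apply Finset.sum_eq_zero; intro a _
      rw [hsum]
      rw [hW', Real.log_one, mul_zero, mul_zero]
    have e4 : (∑ a, P' a * ∑ b, V a b * Real.log (V a b)) = 0 := by
      apply Finset.sum_eq_zero; intro a _
      rw [hsum]
      rw [hV', Real.log_one, mul_zero, mul_zero]
    rw [e1, e2, e3, e4]
    simp only [neg_zero, sub_zero, sub_self, abs_zero]
    have hXY1 : (1:ℝ) ≤ nX * nY := by nlinarith
    have ht1 : 0 ≤ -(nX * nY * (δ + δ') * Real.log ((δ + δ') * nX)) := by
      have hlog : Real.log ((δ + δ') * nX) < 0 := by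
        apply Real.log_neg (by positivity)
        have : (δ + δ') * nX ≤ nX * nY * (δ + δ') := by nlinarith
        linarith
      have := mul_nonneg (by positivity : (0:ℝ) ≤ nX * nY * (δ + δ'))
        (by linarith : (0:ℝ) ≤ -Real.log ((δ + δ') * nX))
      linarith [this]
    have ht2 : δ * Real.log nY = 0 := by rw [hnY1', Real.log_one, mul_zero]
    have ht3 : 0 ≤ -(nX * nY * δ' * Real.log δ') := by
      have hlog : Real.log δ' < 0 := by
        apply Real.log_neg hδ'
        have : δ' ≤ nX * nY * δ' := by nlinarith
        linarith
      have := mul_nonneg (by positivity : (0:ℝ) ≤ nX * nY * δ')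
        (by linarith : (0:ℝ) ≤ -Real.log δ')
      linarith [this]
    linarith
  · -- card Y ≥ 2
    have hnY2 : (2:ℝ) ≤ nY := by rw [hnY]; exact_mod_cast hY2
    -- abbreviations
    set Q : Y → ℝ := fun b => ∑ a, P a * W a b with hQdef
    set Q' : Y → ℝ := fun b => ∑ a, P' a * V a b with hQ'def
    set hW : X → ℝ := fun a => ∑ b, Real.negMulLog (W a b) with hWdef
    set hV : X → ℝ := fun a => ∑ b, Real.negMulLog (V a b) with hVdef
    set s : ℝ := nX * δ with hsdef
    set t : ℝ := s + nY * δ' with htdef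
    set Θ : ℝ := nX * nY * (δ + δ') with hΘdef
    have hXY2 : (2:ℝ) ≤ nX * nY := by
      nlinarith [mul_nonneg (sub_nonneg.2 hnX1) hnY0.le]
    have hδ'4 : δ' ≤ 1/4 := by
      nlinarith [mul_nonneg (sub_nonneg.2 hXY2) hδ'.le]
    have hΘpos : 0 < Θ := by positivity
    have htpos : 0 < t := by positivity
    have htΘ : t ≤ Θ := by
      rw [htdef, hsdef, hΘdef]
      nlinarith [mul_nonneg (mul_nonneg (sub_nonneg.2 hnY1) hnX0.le) hδ.le,
        mul_nonneg (mul_nonneg (sub_nonneg.2 hnX1) hnY0.le) hδ'.le]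
    have hΘhalf : Θ ≤ 1/2 := hsmall
    have hthalf : t ≤ 1/2 := le_trans htΘ hΘhalf
    have hΘ4 : Θ / nY ≤ 1/4 := by
      rw [div_le_iff₀ hnY0]; linarith
    have ht4Y : t / nY ≤ 1/4 := by
      rw [div_le_iff₀ hnY0]; linarith
    have hlognY : 0 ≤ Real.log nY := Real.log_nonneg hnY1
    -- entry bounds
    have hWle1 : ∀ a b, W a b ≤ 1 := by
      intro a b
      calc W a b ≤ ∑ b', W a b' :=
        Finset.single_le_sum (f := fun b' => W a b') (fun b' _ => hW0 a b') (Finset.mem_univ b)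
      _ = 1 := hW1 a
    have hVle1 : ∀ a b, V a b ≤ 1 := by
      intro a b
      calc V a b ≤ ∑ b', V a b' :=
        Finset.single_le_sum (f := fun b' => V a b') (fun b' _ => hV0 a b') (Finset.mem_univ b)
      _ = 1 := hV1 a
    have hQ0 : ∀ b, 0 ≤ Q b := fun b =>
      Finset.sum_nonneg (fun a _ => mul_nonneg (hP0 a) (hW0 a b))
    have hQ'0 : ∀ b, 0 ≤ Q' b := fun b =>
      Finset.sum_nonneg (fun a _ => mul_nonneg (hP'0 a) (hV0 a b))
    have hQ1 : ∀ b, Q b ≤ 1 := by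
      intro b
      calc Q b ≤ ∑ a, P a * 1 :=
        Finset.sum_le_sum (fun a _ => mul_le_mul_of_nonneg_left (hWle1 a b) (hP0 a))
      _ = 1 := by simp [hP1]
    have hQ'1 : ∀ b, Q' b ≤ 1 := by
      intro b
      calc Q' b ≤ ∑ a, P' a * 1 :=
        Finset.sum_le_sum (fun a _ => mul_le_mul_of_nonneg_left (hVle1 a b) (hP'0 a))
      _ = 1 := by simp [hP'1]
    -- rewrite LHS in terms of negMulLog
    have e1 : (-∑ b, Q b * Real.log (Q b)) = ∑ b, Real.negMulLog (Q b) := by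
      rw [← Finset.sum_neg_distrib]
      exact Finset.sum_congr rfl (fun b _ => by rw [Real.negMulLog_eq_neg])
    have e2 : (-∑ b, Q' b * Real.log (Q' b)) = ∑ b, Real.negMulLog (Q' b) := by
      rw [← Finset.sum_neg_distrib]
      exact Finset.sum_congr rfl (fun b _ => by rw [Real.negMulLog_eq_neg])
    have e3 : (-∑ a, P a * ∑ b, W a b * Real.log (W a b)) = ∑ a, P a * hW a := by
      rw [← Finset.sum_neg_distrib]
      refine Finset.sum_congr rfl (fun a _ => ?_)
      have : hW a = -∑ b, W a b * Real.log (W a b) := by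
        rw [hWdef, ← Finset.sum_neg_distrib]
        exact Finset.sum_congr rfl (fun b _ => by rw [Real.negMulLog_eq_neg])
      rw [this]; ring
    have e4 : (-∑ a, P' a * ∑ b, V a b * Real.log (V a b)) = ∑ a, P' a * hV a := by
      rw [← Finset.sum_neg_distrib]
      refine Finset.sum_congr rfl (fun a _ => ?_)
      have : hV a = -∑ b, V a b * Real.log (V a b) := by
        rw [hVdef, ← Finset.sum_neg_distrib]
        exact Finset.sum_congr rfl (fun b _ => by rw [Real.negMulLog_eq_neg])
      rw [this]; ring
    rw [e1, e2, e3, e4]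
    -- A bound
    have hsumQ : ∑ b, |Q b - Q' b| ≤ t := by
      have hb : ∀ b, |Q b - Q' b| ≤ ∑ a, (δ * W a b + P' a * δ') := by
        intro b
        rw [hQdef, hQ'def]
        calc |∑ a, P a * W a b - ∑ a, P' a * V a b|
            = |∑ a, (P a * W a b - P' a * V a b)| := by rw [Finset.sum_sub_distrib]
          _ ≤ ∑ a, |P a * W a b - P' a * V a b| := Finset.abs_sum_le_sum_abs _ _
          _ ≤ ∑ a, (δ * W a b + P' a * δ') := by
              apply Finset.sum_le_sum
              intro a _
              have : P a * W a b - P' a * V a b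
                  = (P a - P' a) * W a b + P' a * (W a b - V a b) := by ring
              rw [this]
              calc |(P a - P' a) * W a b + P' a * (W a b - V a b)|
                  ≤ |(P a - P' a) * W a b| + |P' a * (W a b - V a b)| := abs_add_le _ _
                _ = |P a - P' a| * W a b + P' a * |W a b - V a b| := by
                    rw [abs_mul, abs_mul, abs_of_nonneg (hW0 a b), abs_of_nonneg (hP'0 a)]
                _ ≤ δ * W a b + P' a * δ' :=
                    add_le_add (mul_le_mul_of_nonneg_right (hPP' a) (hW0 a b))
                      (mul_le_mul_of_nonneg_left (hWV a b) (hP'0 a))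
      calc ∑ b, |Q b - Q' b| ≤ ∑ b, ∑ a, (δ * W a b + P' a * δ') :=
            Finset.sum_le_sum (fun b _ => hb b)
        _ = ∑ a, ∑ b, (δ * W a b + P' a * δ') := Finset.sum_comm
        _ = t := by
            have hrow : ∀ a : X, ∑ b, (δ * W a b + P' a * δ') = δ + P' a * (nY * δ') := by
              intro a
              rw [Finset.sum_add_distrib, ← Finset.mul_sum, hW1 a, mul_one,
                Finset.sum_const, Finset.card_univ, nsmul_eq_mul, ← hnY]
              ring
            rw [Finset.sum_congr rfl (fun a _ => hrow a), Finset.sum_add_distrib,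
              Finset.sum_const, Finset.card_univ, nsmul_eq_mul, ← Finset.sum_mul, hP'1,
              ← hnX, htdef, hsdef]
            ring
    have hA : |∑ b, Real.negMulLog (Q b) - ∑ b, Real.negMulLog (Q' b)| ≤
        nY * Real.negMulLog (t / nY) := by
      have := mi_ent_cont Q Q' hQ0 hQ1 hQ'0 hQ'1 t hsumQ hthalf
        (by rw [← hnY]; exact le_trans ht4Y mi_exp)
      rwa [← hnY] at this
    -- B bound
    have hVnn : ∀ a, 0 ≤ hV a := fun a =>
      Finset.sum_nonneg (fun b _ => Real.negMulLog_nonneg (hV0 a b) (hVle1 a b))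
    have hVtop : ∀ a, hV a ≤ Real.log nY := by
      intro a
      have hj := mi_jensen (fun b => V a b) (fun b => hV0 a b)
      rw [hV1 a, ← hnY] at hj
      calc hV a ≤ nY * Real.negMulLog (1 / nY) := hj
        _ = Real.log nY := by
            rw [Real.negMulLog, one_div, Real.log_inv]
            field_simp
    have hB1 : ∀ a, |hW a - hV a| ≤ nY * Real.negMulLog δ' := by
      intro a
      have hsWV : ∑ b, |W a b - V a b| ≤ nY * δ' := by
        calc ∑ b, |W a b - V a b| ≤ ∑ b : Y, δ' :=
              Finset.sum_le_sum (fun b _ => hWV a b)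
          _ = nY * δ' := by
              rw [Finset.sum_const, Finset.card_univ, nsmul_eq_mul, hnY]
      have hhalf : nY * δ' ≤ 1/2 := by
        nlinarith [mul_nonneg (mul_nonneg (sub_nonneg.2 hnX1) hnY0.le) hδ'.le]
      have := mi_ent_cont (fun b => W a b) (fun b => V a b)
        (fun b => hW0 a b) (fun b => hWle1 a b) (fun b => hV0 a b) (fun b => hVle1 a b)
        (nY * δ') hsWV hhalf
        (by rw [← hnY, mul_div_cancel_left₀ _ hnY0.ne']; exact le_trans hδ'4 mi_exp)
      rwa [← hnY, mul_div_cancel_left₀ _ hnY0.ne'] at this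
    have hB : |∑ a, P a * hW a - ∑ a, P' a * hV a| ≤
        nY * Real.negMulLog δ' + s * Real.log nY := by
      have edecomp : ∑ a, P a * hW a - ∑ a, P' a * hV a
          = (∑ a, P a * (hW a - hV a)) + ∑ a, (P a - P' a) * hV a := by
        rw [← Finset.sum_add_distrib, ← Finset.sum_sub_distrib]
        exact Finset.sum_congr rfl (fun a _ => by ring)
      rw [edecomp]
      calc |(∑ a, P a * (hW a - hV a)) + ∑ a, (P a - P' a) * hV a|
          ≤ |∑ a, P a * (hW a - hV a)| + |∑ a, (P a - P' a) * hV a| := abs_add_le _ _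
        _ ≤ (∑ a, |P a * (hW a - hV a)|) + ∑ a, |(P a - P' a) * hV a| := by
            gcongr <;> exact Finset.abs_sum_le_sum_abs _ _
        _ ≤ (∑ a, P a * (nY * Real.negMulLog δ')) + ∑ a, δ * Real.log nY := by
            gcongr with a _ a _
            · rw [abs_mul, abs_of_nonneg (hP0 a)]
              exact mul_le_mul_of_nonneg_left (hB1 a) (hP0 a)
            · rw [abs_mul, abs_of_nonneg (hVnn a)]
              exact mul_le_mul (hPP' a) (hVtop a) (hVnn a) hδ.le
        _ = nY * Real.negMulLog δ' + s * Real.log nY := by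
            rw [← Finset.sum_mul, hP1, one_mul, Finset.sum_const, Finset.card_univ,
              nsmul_eq_mul, hsdef, hnX]
            ring
    -- key comparison
    have hkey : nY * Real.negMulLog (t / nY) + s * Real.log nY ≤
        nY * Real.negMulLog (Θ / nY) + δ * Real.log nY := by
      rcases Nat.lt_or_ge (Fintype.card X) 2 with hX1 | hX2
      · -- card X = 1
        have hX1' : Fintype.card X = 1 := by
          have := Fintype.card_pos (α := X); omega
        have hnXeq : nX = 1 := by rw [hnX, hX1']; norm_num
        have hseq : s = δ := by rw [hsdef, hnXeq, one_mul]
        have hmono : Real.negMulLog (t / nY) ≤ Real.negMulLog (Θ / nY) := by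
          apply mi_eta_mono
          · exact Set.mem_Icc.2 ⟨by positivity, le_trans ht4Y mi_exp⟩
          · exact Set.mem_Icc.2 ⟨by positivity, le_trans hΘ4 mi_exp⟩
          · exact div_le_div_of_nonneg_right htΘ hnY0.le
        rw [hseq]
        have := mul_le_mul_of_nonneg_left hmono hnY0.le
        linarith
      · -- card X ≥ 2
        have hnX2 : (2:ℝ) ≤ nX := by rw [hnX]; exact_mod_cast hX2
        have h2tΘ : 2 * t ≤ Θ := by
          rw [htdef, hsdef, hΘdef]
          nlinarith [mul_nonneg (mul_nonneg (sub_nonneg.2 hnY2) hnX0.le) hδ.le,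
            mul_nonneg (mul_nonneg (sub_nonneg.2 hnX2) hnY0.le) hδ'.le]
        have ht14 : t ≤ 1/4 := by linarith
        have hst : s ≤ t := by
          rw [htdef]; nlinarith [mul_nonneg hnY0.le hδ'.le]
        have h2t4 : (2 * t) / nY ≤ 1/4 := by
          rw [div_le_iff₀ hnY0]; linarith
        have hmono : Real.negMulLog ((2 * t) / nY) ≤ Real.negMulLog (Θ / nY) := by
          apply mi_eta_mono
          · exact Set.mem_Icc.2 ⟨by positivity, le_trans h2t4 mi_exp⟩
          · exact Set.mem_Icc.2 ⟨by positivity, le_trans hΘ4 mi_exp⟩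
          · exact div_le_div_of_nonneg_right h2tΘ hnY0.le
        have hF1 : nY * Real.negMulLog (t / nY) = t * Real.log nY - t * Real.log t :=
          mi_scale hnY0 htpos
        have hF2 : nY * Real.negMulLog ((2 * t) / nY)
            = 2 * t * Real.log nY - 2 * t * Real.log (2 * t) := mi_scale hnY0 (by linarith)
        have hlog2t : Real.log (2 * t) = Real.log 2 + Real.log t :=
          Real.log_mul (by norm_num) htpos.ne'
        have hlog4t : Real.log (4 * t) ≤ 0 :=
          Real.log_nonpos (by positivity) (by linarith)
        have hlog4t' : Real.log (4 * t) = Real.log 2 + Real.log 2 + Real.log t := by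
          rw [show (4 : ℝ) * t = 2 * (2 * t) by ring, Real.log_mul (by norm_num)
            (by positivity), hlog2t]
          ring
        -- t log nY - t log t + s log nY ≤ 2t log nY - 2t log (2t)
        have hstep : t * Real.log nY - t * Real.log t + s * Real.log nY ≤
            2 * t * Real.log nY - 2 * t * Real.log (2 * t) := by
          have h1 : s * Real.log nY ≤ t * Real.log nY :=
            mul_le_mul_of_nonneg_right hst hlognY
          have h2 : 0 ≤ t * (-(Real.log (4 * t))) :=
            mul_nonneg htpos.le (by linarith)
          rw [hlog2t]
          nlinarith [hlog4t']
        have hδlog : 0 ≤ δ * Real.log nY := mul_nonneg hδ.le hlognY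
        calc nY * Real.negMulLog (t / nY) + s * Real.log nY
            = t * Real.log nY - t * Real.log t + s * Real.log nY := by rw [hF1]
          _ ≤ 2 * t * Real.log nY - 2 * t * Real.log (2 * t) := hstep
          _ = nY * Real.negMulLog ((2 * t) / nY) := hF2.symm
          _ ≤ nY * Real.negMulLog (Θ / nY) := mul_le_mul_of_nonneg_left hmono hnY0.le
          _ ≤ nY * Real.negMulLog (Θ / nY) + δ * Real.log nY := le_add_of_nonneg_right hδlog
    -- RHS identification
    have hRHS : -(nX * nY * (δ + δ') * Real.log ((δ + δ') * nX)) + δ * Real.log nY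
        - nX * nY * δ' * Real.log δ'
        = nY * Real.negMulLog (Θ / nY) + δ * Real.log nY + nX * nY * Real.negMulLog δ' := by
      have hdiv : Θ / nY = nX * (δ + δ') := by
        rw [hΘdef]; field_simp
      rw [hdiv, Real.negMulLog, Real.negMulLog]
      have : Real.log (nX * (δ + δ')) = Real.log ((δ + δ') * nX) := by rw [mul_comm]
      rw [this]
      ring
    have hδ'1 : δ' ≤ 1 := by linarith
    have hetaδ' : 0 ≤ Real.negMulLog δ' := Real.negMulLog_nonneg hδ'.le hδ'1
    have hYXY : nY * Real.negMulLog δ' ≤ nX * nY * Real.negMulLog δ' := by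
      nlinarith [mul_nonneg (mul_nonneg (sub_nonneg.2 hnX1) hnY0.le) hetaδ']
    calc |(∑ b, Real.negMulLog (Q b) - ∑ a, P a * hW a) -
          (∑ b, Real.negMulLog (Q' b) - ∑ a, P' a * hV a)|
        = |(∑ b, Real.negMulLog (Q b) - ∑ b, Real.negMulLog (Q' b)) -
            (∑ a, P a * hW a - ∑ a, P' a * hV a)| := by ring_nf
      _ ≤ |∑ b, Real.negMulLog (Q b) - ∑ b, Real.negMulLog (Q' b)| +
            |∑ a, P a * hW a - ∑ a, P' a * hV a| := abs_sub _ _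
      _ ≤ nY * Real.negMulLog (t / nY) + (nY * Real.negMulLog δ' + s * Real.log nY) := by
          gcongr
      _ ≤ nY * Real.negMulLog (Θ / nY) + δ * Real.log nY + nX * nY * Real.negMulLog δ' := by
          linarith
      _ = _ := by rw [hRHS]
end

section
/- (Johnson–Stein–Lovász covering theorem) Let A be a 0-1 matrix with N rows and M columns such that every row contains at least v ones and every column at most a ones. Then there exists a set of K ≤ N/a + (M/v)·log a ≤ (M/v)(1 + log a) columns such that every row of A has a one in at least one of the chosen columns. -/
open Finset

def kk (v M m : ℕ) : ℕ := (m * v + M - 1) / M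

lemma kk_le_iff {v M m t : ℕ} (hM : 0 < M) : kk v M m ≤ t ↔ m * v ≤ t * M := by
  rw [← Nat.lt_succ_iff]
  unfold kk
  rw [Nat.div_lt_iff_lt_mul hM, Nat.succ_mul]
  omega

lemma kk_mono {v M m n : ℕ} (h : m ≤ n) : kk v M m ≤ kk v M n :=
  Nat.div_le_div_right (by have := Nat.mul_le_mul_right v h; omega)

lemma one_le_kk {v M m : ℕ} (hM : 0 < M) (hm : 0 < m) (hv : 0 < v) : 1 ≤ kk v M m := by
  by_contra h
  have h2 := (kk_le_iff (v := v) (m := m) (t := 0) hM).mp (by omega)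
  have h3 : 0 < m * v := Nat.mul_pos hm hv
  omega

lemma kk_mul_le {v M m : ℕ} : kk v M m * M ≤ m * v + M - 1 :=
  Nat.div_mul_le_self _ _

lemma telescope (f : ℕ → ℝ) {m n : ℕ} (h : m ≤ n) :
    ∑ i ∈ Ico m n, (f (i+1) - f i) = f n - f m := by
  rw [Finset.sum_Ico_eq_sub _ h, Finset.sum_range_sub, Finset.sum_range_sub]
  ring

lemma greedy (N M v : ℕ) (hv : 1 ≤ v) (A : Fin N → Fin M → Bool)
    (hrow : ∀ i, v ≤ (univ.filter fun j => A i j = true).card) :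
    ∀ n (U : Finset (Fin N)), U.card = n →
      ∃ C : Finset (Fin M), (∀ i ∈ U, ∃ j ∈ C, A i j = true) ∧
        (C.card : ℝ) ≤ ∑ m ∈ Icc 1 n, ((kk v M m : ℝ))⁻¹ := by
  intro n
  induction n using Nat.strong_induction_on with
  | _ n IH =>
    intro U hU
    rcases Nat.eq_zero_or_pos n with h0 | hn
    · subst h0
      have : U = ∅ := card_eq_zero.mp hU
      subst this
      exact ⟨∅, by simp, by simp⟩
    · have hUne : U.Nonempty := card_pos.mp (hU ▸ hn)
      obtain ⟨i0, _⟩ := hUne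
      have hvM : v ≤ M := le_trans (hrow i0) (le_trans (card_filter_le _ _) (by simp))
      have hM : 0 < M := lt_of_lt_of_le hv hvM
      have hsum : (n * v : ℕ) ≤ ∑ j : Fin M, (U.filter fun i => A i j = true).card := by
        calc n * v = ∑ _i ∈ U, v := by rw [sum_const, hU, smul_eq_mul]
        _ ≤ ∑ i ∈ U, (univ.filter fun j => A i j = true).card :=
            sum_le_sum fun i _ => hrow i
        _ = ∑ j : Fin M, (U.filter fun i => A i j = true).card := by
            simp only [card_filter]
            exact Finset.sum_comm
      have hex : ∃ j, kk v M n ≤ (U.filter fun i => A i j = true).card := by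
        by_contra hc
        push_neg at hc
        have hle : ∑ j : Fin M, (U.filter fun i => A i j = true).card
            ≤ ∑ _j : Fin M, (kk v M n - 1) := sum_le_sum fun j _ => by have := hc j; omega
        rw [sum_const, card_univ, Fintype.card_fin, smul_eq_mul] at hle
        have h1 : 1 ≤ kk v M n := one_le_kk hM hn hv
        have h2 : kk v M n * M ≤ n * v + M - 1 := kk_mul_le
        have h4 : M * kk v M n = M * (kk v M n - 1) + M := by
          conv_lhs => rw [show kk v M n = (kk v M n - 1) + 1 from (Nat.succ_pred_eq_of_pos h1).symm]
          ring
        have h5 : kk v M n * M = M * kk v M n := mul_comm _ _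
        omega
      obtain ⟨j0, hj0⟩ := hex
      set D := U.filter (fun i => A i j0 = true) with hD
      set d := D.card with hd
      have hdn : d ≤ n := hU ▸ card_le_card (filter_subset _ _)
      have hd1 : 1 ≤ d := le_trans (one_le_kk hM hn hv) hj0
      have hV : (U \ D).card = n - d := by rw [card_sdiff_of_subset (filter_subset _ _), hU]
      obtain ⟨C', hcov', hcard'⟩ := IH (n - d) (by omega) (U \ D) hV
      refine ⟨insert j0 C', ?_, ?_⟩
      · intro i hi
        by_cases hA : A i j0 = true
        · exact ⟨j0, mem_insert_self _ _, hA⟩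
        · obtain ⟨j, hj, hAj⟩ := hcov' i (by simp [hD, mem_sdiff, mem_filter, hi, hA])
          exact ⟨j, mem_insert_of_mem hj, hAj⟩
      · have key : 1 ≤ ∑ m ∈ Ico (n-d+1) (n+1), ((kk v M m : ℝ))⁻¹ := by
          have hlow : ∀ m ∈ Ico (n-d+1) (n+1), ((d:ℝ))⁻¹ ≤ ((kk v M m : ℝ))⁻¹ := by
            intro m hm
            rw [mem_Ico] at hm
            have h1 : 1 ≤ kk v M m := one_le_kk hM (by omega) hv
            have h2 : kk v M m ≤ d := le_trans (kk_mono (by omega : m ≤ n)) hj0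
            exact inv_anti₀ (by exact_mod_cast h1) (by exact_mod_cast h2)
          have := card_nsmul_le_sum (Ico (n-d+1) (n+1)) (fun m => ((kk v M m : ℝ))⁻¹)
            ((d:ℝ))⁻¹ hlow
          rw [Nat.card_Ico, show n + 1 - (n - d + 1) = d from by omega, nsmul_eq_mul] at this
          have hdne : (d:ℝ) ≠ 0 := by positivity
          rwa [mul_inv_cancel₀ hdne] at this
        have hsplit : ∑ m ∈ Ico 1 (n-d+1), ((kk v M m : ℝ))⁻¹
            + ∑ m ∈ Ico (n-d+1) (n+1), ((kk v M m : ℝ))⁻¹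
            = ∑ m ∈ Ico 1 (n+1), ((kk v M m : ℝ))⁻¹ :=
          sum_Ico_consecutive _ (by omega) (by omega)
        rw [← Finset.Ico_add_one_right_eq_Icc] at hcard' ⊢
        have hci : ((insert j0 C').card : ℝ) ≤ (C'.card : ℝ) + 1 := by
          exact_mod_cast card_insert_le _ _
        linarith

lemma log_sum (a : ℕ) (ha : 1 ≤ a) :
    ∑ w ∈ Ico 1 a, (((w:ℝ)) + 1)⁻¹ ≤ Real.log a := by
  have htel : ∑ w ∈ Ico 1 a, (Real.log (w+1 : ℕ) - Real.log (w : ℕ)) = Real.log a := by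
    rw [telescope (fun w => Real.log (w : ℕ)) ha]
    norm_num
  calc ∑ w ∈ Ico 1 a, (((w:ℝ)) + 1)⁻¹
      ≤ ∑ w ∈ Ico 1 a, (Real.log (w+1 : ℕ) - Real.log (w : ℕ)) := by
        apply sum_le_sum
        intro w hw
        rw [mem_Ico] at hw
        have hw1 : (1:ℝ) ≤ (w:ℝ) := by exact_mod_cast hw.1
        have hx : (0:ℝ) < (w:ℝ) := by linarith
        have hx1 : (0:ℝ) < (w:ℝ) + 1 := by linarith
        have hlog := Real.log_le_sub_one_of_pos (x := (w:ℝ)/((w:ℝ)+1)) (by positivity)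
        rw [Real.log_div (by positivity) (by positivity)] at hlog
        have he : (w:ℝ)/((w:ℝ)+1) - 1 = -((w:ℝ)+1)⁻¹ := by field_simp; ring
        rw [he] at hlog
        push_cast
        linarith
    _ = Real.log a := htel

lemma sum_bound (N M v a : ℕ) (hv : 1 ≤ v) (ha : 1 ≤ a) (hNv : N * v ≤ M * a) :
    ∑ m ∈ Icc 1 N, ((kk v M m : ℝ))⁻¹ ≤ (N:ℝ)/a + ((M:ℝ)/v) * Real.log a := by
  have hloga : 0 ≤ Real.log a := Real.log_nonneg (by exact_mod_cast ha)
  rcases Nat.eq_zero_or_pos N with hN0 | hN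
  · subst hN0
    simp
    positivity
  have hM : 0 < M := by
    rcases Nat.eq_zero_or_pos M with h | h
    · subst h
      simp at hNv
      omega
    · exact h
  set f : ℕ → ℝ := fun w => -((w:ℝ))⁻¹ with hf
  have stepA : ∀ m ∈ Icc 1 N, ((kk v M m : ℝ))⁻¹
      = (a:ℝ)⁻¹ + ∑ w ∈ Ico (kk v M m) a, (f (w+1) - f w) := by
    intro m hm
    rw [mem_Icc] at hm
    have hka : kk v M m ≤ a := (kk_le_iff hM).mpr
      (le_trans (Nat.mul_le_mul_right v hm.2) (by rw [mul_comm a M]; exact hNv))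
    rw [telescope f hka]
    simp only [hf]
    ring
  rw [Finset.sum_congr rfl stepA, Finset.sum_add_distrib, Finset.sum_const, Nat.card_Icc]
  simp only [Nat.add_sub_cancel, nsmul_eq_mul]
  have hswap : ∑ m ∈ Icc 1 N, ∑ w ∈ Ico (kk v M m) a, (f (w+1) - f w)
      = ∑ w ∈ Ico 1 a, (((Icc 1 N).filter (fun m => kk v M m ≤ w)).card : ℝ) * (f (w+1) - f w) := by
    have h1 : ∀ m ∈ Icc 1 N, ∑ w ∈ Ico (kk v M m) a, (f (w+1) - f w)
        = ∑ w ∈ Ico 1 a, (if kk v M m ≤ w then (f (w+1) - f w) else 0) := by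
      intro m hm
      rw [mem_Icc] at hm
      have hk1 : 1 ≤ kk v M m := one_le_kk hM (by omega) hv
      rw [← Finset.sum_filter]
      congr 1
      ext w
      simp only [mem_Ico, mem_filter]
      omega
    rw [Finset.sum_congr rfl h1, Finset.sum_comm]
    apply Finset.sum_congr rfl
    intro w _
    rw [← Finset.sum_filter, Finset.sum_const, nsmul_eq_mul]
  rw [hswap]
  have hterm : ∀ w ∈ Ico 1 a,
      (((Icc 1 N).filter (fun m => kk v M m ≤ w)).card : ℝ) * (f (w+1) - f w)
      ≤ ((M:ℝ)/v) * (((w:ℝ)) + 1)⁻¹ := by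
    intro w hw
    rw [mem_Ico] at hw
    have hw1 : (1:ℝ) ≤ (w:ℝ) := by exact_mod_cast hw.1
    have hcard : (((Icc 1 N).filter (fun m => kk v M m ≤ w)).card : ℝ) ≤ (w:ℝ)*(M:ℝ)/(v:ℝ) := by
      have hsub : (Icc 1 N).filter (fun m => kk v M m ≤ w) ⊆ Icc 1 (w*M/v) := by
        intro m hm
        rw [mem_filter, mem_Icc] at hm
        rw [mem_Icc]
        refine ⟨hm.1.1, ?_⟩
        rw [Nat.le_div_iff_mul_le hv]
        exact (kk_le_iff hM).mp hm.2
      have h2 : ((Icc 1 N).filter (fun m => kk v M m ≤ w)).card ≤ w*M/v := by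
        have := card_le_card hsub
        rwa [Nat.card_Icc, Nat.add_sub_cancel] at this
      calc (((Icc 1 N).filter (fun m => kk v M m ≤ w)).card : ℝ) ≤ ((w*M/v : ℕ) : ℝ) := by
            exact_mod_cast h2
        _ ≤ ((w*M : ℕ):ℝ)/(v:ℝ) := Nat.cast_div_le
        _ = (w:ℝ)*(M:ℝ)/(v:ℝ) := by push_cast; ring
    have hg0 : 0 ≤ f (w+1) - f w := by
      simp only [hf]
      push_cast
      have : ((w:ℝ)+1)⁻¹ ≤ ((w:ℝ))⁻¹ := by
        apply inv_anti₀ <;> linarith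
      linarith
    calc (((Icc 1 N).filter (fun m => kk v M m ≤ w)).card : ℝ) * (f (w+1) - f w)
        ≤ ((w:ℝ)*(M:ℝ)/(v:ℝ)) * (f (w+1) - f w) := by
          apply mul_le_mul_of_nonneg_right hcard hg0
      _ = ((M:ℝ)/v) * (((w:ℝ)) + 1)⁻¹ := by
          simp only [hf]
          push_cast
          have hvv : (0:ℝ) < (v:ℝ) := by exact_mod_cast hv
          field_simp
          ring
  calc (N:ℝ) * (a:ℝ)⁻¹ + ∑ w ∈ Ico 1 a, (((Icc 1 N).filter (fun m => kk v M m ≤ w)).card : ℝ) * (f (w+1) - f w)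
      ≤ (N:ℝ) * (a:ℝ)⁻¹ + ∑ w ∈ Ico 1 a, ((M:ℝ)/v) * (((w:ℝ)) + 1)⁻¹ := by
        have := sum_le_sum hterm
        linarith
    _ ≤ (N:ℝ)/a + ((M:ℝ)/v) * Real.log a := by
        rw [← Finset.mul_sum]
        have hMv : (0:ℝ) ≤ (M:ℝ)/(v:ℝ) := by positivity
        have := mul_le_mul_of_nonneg_left (log_sum a ha) hMv
        have hNa : (N:ℝ) * (a:ℝ)⁻¹ = (N:ℝ)/(a:ℝ) := by ring
        linarith

/-- Johnson–Stein–Lovász covering theorem: if a 0-1 matrix with `N` rows and `M`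
columns has at least `v` ones in each row and at most `a` ones in each column,
then some `K ≤ N/a + (M/v) log a ≤ (M/v)(1 + log a)` columns cover all rows. -/
theorem johnson_stein_lovasz (N M v a : ℕ) (hv : 1 ≤ v) (ha : 1 ≤ a)
    (A : Fin N → Fin M → Bool)
    (hrow : ∀ i, v ≤ (univ.filter fun j => A i j = true).card)
    (hcol : ∀ j, (univ.filter fun i => A i j = true).card ≤ a) :
    ∃ C : Finset (Fin M),
      (∀ i, ∃ j ∈ C, A i j = true) ∧
      (C.card : ℝ) ≤ (N : ℝ) / a + ((M : ℝ) / v) * Real.log a ∧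
      (N : ℝ) / a + ((M : ℝ) / v) * Real.log a ≤ ((M : ℝ) / v) * (1 + Real.log a) := by
  have hNv : N * v ≤ M * a := by
    calc N * v = ∑ _i : Fin N, v := by rw [sum_const, card_univ, Fintype.card_fin, smul_eq_mul]
    _ ≤ ∑ i : Fin N, (univ.filter fun j => A i j = true).card := sum_le_sum fun i _ => hrow i
    _ = ∑ j : Fin M, (univ.filter fun i => A i j = true).card := by
        simp only [card_filter]
        exact Finset.sum_comm
    _ ≤ ∑ _j : Fin M, a := sum_le_sum fun j _ => hcol j
    _ = M * a := by rw [sum_const, card_univ, Fintype.card_fin, smul_eq_mul]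
  obtain ⟨C, hcov, hcard⟩ := greedy N M v hv A hrow N univ (by simp)
  have hNa : (N:ℝ)/a ≤ (M:ℝ)/v := by
    rw [div_le_div_iff₀ (by positivity) (by positivity)]
    exact_mod_cast hNv
  refine ⟨C, fun i => hcov i (mem_univ i),
    le_trans hcard (sum_bound N M v a hv ha hNv), ?_⟩
  have : ((M:ℝ)/v) * (1 + Real.log a) = (M:ℝ)/v + ((M:ℝ)/v) * Real.log a := by ring
  linarith
end
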